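/- Let (A,m) be a 2-multiarrangement with A = {H_1,…,H_n}, m_i = m(H_i) > 0, m_1 ≥ m_2 ≥ … ≥ m_n, and |m| = Σ_i m_i. If m_1 ≥ |m|/2, then the exponents of (A,m) are (m_1, |m|−m_1). -/

import Mathlib

open MvPolynomial

/-- The linear form `α = Σ_j a_j x_j` with coefficient vector `a`. -/
noncomputable def linForm {K : Type} [Field K] {ℓ : ℕ} (a : Fin ℓ → K) :
    MvPolynomial (Fin ℓ) K :=
  ∑ j, C (a j) * X j

/-- Application `θ(α) = Σ_j a_j f_j` of a derivation `θ = Σ f_j ∂_{x_j}` to the linear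
form with coefficient vector `a`, as a linear map in `θ`. -/
noncomputable def appL {K : Type} [Field K] {ℓ : ℕ} (a : Fin ℓ → K) :
    (Fin ℓ → MvPolynomial (Fin ℓ) K) →ₗ[MvPolynomial (Fin ℓ) K] MvPolynomial (Fin ℓ) K :=
  ∑ j, (C (a j) : MvPolynomial (Fin ℓ) K) • (LinearMap.proj j :
    (Fin ℓ → MvPolynomial (Fin ℓ) K) →ₗ[MvPolynomial (Fin ℓ) K] MvPolynomial (Fin ℓ) K)

/-- The logarithmic derivation module `D(A,m)` of the multiarrangement with defining
forms `c i` and multiplicities `m i`. -/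
noncomputable def Dlog {K : Type} [Field K] {ℓ : ℕ} {η : Type} (c : η → Fin ℓ → K)
    (m : η → ℕ) :
    Submodule (MvPolynomial (Fin ℓ) K) (Fin ℓ → MvPolynomial (Fin ℓ) K) where
  carrier := {θ | ∀ i, linForm (c i) ^ m i ∣ appL (c i) θ}
  add_mem' := fun ha hb i => by rw [map_add]; exact dvd_add (ha i) (hb i)
  zero_mem' := fun i => by rw [map_zero]; exact dvd_zero _
  smul_mem' := fun s θ h i => by rw [map_smul, smul_eq_mul]; exact (h i).mul_left s


set_option linter.unusedSectionVars false

section Basics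
variable {K : Type} [Field K]

lemma appL_apply (a : Fin 2 → K) (θ : Fin 2 → MvPolynomial (Fin 2) K) :
    appL a θ = C (a 0) * θ 0 + C (a 1) * θ 1 := by
  simp [appL, Fin.sum_univ_two, smul_eq_C_mul]

lemma linForm_two (a : Fin 2 → K) : linForm a = C (a 0) * X 0 + C (a 1) * X 1 := by
  simp [linForm, Fin.sum_univ_two]

lemma linForm_isHomogeneous (a : Fin 2 → K) : (linForm a).IsHomogeneous 1 := by
  rw [linForm_two]
  exact (((isHomogeneous_C _ _).mul (isHomogeneous_X _ _)).add
    ((isHomogeneous_C _ _).mul (isHomogeneous_X _ _)))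

lemma eval_linForm (a : Fin 2 → K) (z : Fin 2 → K) :
    eval z (linForm a) = a 0 * z 0 + a 1 * z 1 := by
  simp [linForm_two]

lemma linForm_ne_zero {a : Fin 2 → K} (ha : a ≠ 0) : linForm a ≠ 0 := by
  intro h
  apply ha
  funext j
  have h0 := congrArg (eval ![(1:K), 0]) h
  have h1 := congrArg (eval ![(0:K), 1]) h
  rw [eval_linForm] at h0 h1
  simp at h0 h1
  fin_cases j <;> simp [h0, h1]

lemma MvPolynomial.IsHomogeneous.eval_smul' {f : MvPolynomial (Fin 2) K} {d : ℕ}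
    (hf : f.IsHomogeneous d) (r : K) (z : Fin 2 → K) :
    eval (r • z) f = r ^ d * eval z f := by
  rw [f.as_sum, map_sum, map_sum, Finset.mul_sum]
  refine Finset.sum_congr rfl fun v hv => ?_
  have hd : ∑ i ∈ v.support, v i = d := by
    simpa [Finsupp.weight_apply, Finsupp.sum] using hf (mem_support_iff.mp hv)
  rw [eval_monomial, eval_monomial, Finsupp.prod, Finsupp.prod, ← hd]
  simp only [Pi.smul_apply, smul_eq_mul, mul_pow]
  rw [Finset.prod_mul_distrib, Finset.prod_pow_eq_pow_sum]
  ring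

end Basics

set_option linter.unusedSectionVars false

section Psi
variable {K : Type} [Field K] [CharZero K] (s : K)

/-- Restriction to the affine line `t ↦ (t, s t + 1)`. -/
noncomputable def psi : MvPolynomial (Fin 2) K →ₐ[K] Polynomial K :=
  aeval ![Polynomial.X, Polynomial.C s * Polynomial.X + 1]

@[simp] lemma psi_X0 : psi s (X 0) = Polynomial.X := by simp [psi]
@[simp] lemma psi_X1 : psi s (X 1) = Polynomial.C s * Polynomial.X + 1 := by simp [psi]
@[simp] lemma psi_C (r : K) : psi s (C r) = Polynomial.C r := by
  simp [psi, algHom_C, algebraMap_eq]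

lemma psi_linForm (a : Fin 2 → K) :
    psi s (linForm a) = Polynomial.C (a 0 + s * a 1) * Polynomial.X + Polynomial.C (a 1) := by
  rw [linForm_two]
  simp only [map_add, map_mul, psi_C, psi_X0, psi_X1, Polynomial.C_add, Polynomial.C_mul]
  ring

lemma eval_psi (t : K) (f : MvPolynomial (Fin 2) K) :
    Polynomial.eval t (psi s f) = eval ![t, s * t + 1] f := by
  have h : (Polynomial.aeval t).comp (psi s) = MvPolynomial.aeval ![t, s * t + 1] := by
    refine MvPolynomial.algHom_ext fun j => ?_
    fin_cases j <;> simp [psi]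
  have h2 := AlgHom.congr_fun h f
  simp only [AlgHom.coe_comp, Function.comp_apply] at h2
  have h3 : Polynomial.aeval t (psi s f) = Polynomial.eval t (psi s f) :=
    congrFun (Polynomial.coe_aeval_eq_eval t) _
  have h4 : MvPolynomial.aeval ![t, s * t + 1] f = eval ![t, s * t + 1] f :=
    RingHom.congr_fun (MvPolynomial.coe_aeval_eq_eval _) f
  rw [← h3, h2, h4]

lemma natDegree_psi_le_of_homog {d : ℕ} {f : MvPolynomial (Fin 2) K}
    (hf : f.IsHomogeneous d) : (psi s f).natDegree ≤ d := by
  conv_lhs => rw [f.as_sum]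
  rw [map_sum]
  refine Polynomial.natDegree_sum_le_of_forall_le _ _ fun v hv => ?_
  have hv' : v 0 + v 1 = d := by
    have := hf (mem_support_iff.mp hv)
    simpa [Finsupp.weight_apply, Finsupp.sum_fintype, Fin.sum_univ_two] using this
  have hmon : monomial v (coeff v f) = C (coeff v f) * (X 0 ^ v 0 * X 1 ^ v 1) := by
    rw [monomial_eq]
    congr 1
    rw [Finsupp.prod_fintype _ _ (fun i => pow_zero _), Fin.prod_univ_two]
  rw [hmon, map_mul, map_mul, map_pow, map_pow, psi_C, psi_X0, psi_X1]
  refine le_trans Polynomial.natDegree_mul_le ?_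
  rw [Polynomial.natDegree_C, zero_add]
  refine le_trans Polynomial.natDegree_mul_le ?_
  refine le_trans (add_le_add Polynomial.natDegree_pow_le Polynomial.natDegree_pow_le) ?_
  rw [Polynomial.natDegree_X]
  have h1 : (Polynomial.C s * Polynomial.X + 1 : Polynomial K).natDegree ≤ 1 := by
    refine le_trans (Polynomial.natDegree_add_le _ _) ?_
    simp [Polynomial.natDegree_C_mul_le s Polynomial.X |>.trans Polynomial.natDegree_X_le]
  calc v 0 * 1 + v 1 * (Polynomial.C s * Polynomial.X + 1 : Polynomial K).natDegree
      ≤ v 0 * 1 + v 1 * 1 := by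
        exact add_le_add le_rfl (Nat.mul_le_mul_left _ h1)
    _ = d := by omega

/-- The `η` form: `psi s η = 1`. -/
noncomputable def etaF : MvPolynomial (Fin 2) K := X 1 - C s * X 0

@[simp] lemma psi_etaF : psi s (etaF s) = 1 := by
  simp [etaF]

lemma etaF_isHomogeneous : (etaF s).IsHomogeneous 1 :=
  (isHomogeneous_X _ _).sub ((isHomogeneous_C _ _).mul (isHomogeneous_X _ _))

/-- Homogenization to degree `d` along the line. -/
noncomputable def Hgen (d : ℕ) (f : Polynomial K) : MvPolynomial (Fin 2) K :=
  ∑ k ∈ Finset.range (d + 1), C (f.coeff k) * X 0 ^ k * etaF s ^ (d - k)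

lemma Hgen_isHomogeneous (d : ℕ) (f : Polynomial K) : (Hgen s d f).IsHomogeneous d := by
  refine IsHomogeneous.sum _ _ _ fun k hk => ?_
  have hk' : k ≤ d := Nat.lt_succ_iff.mp (Finset.mem_range.mp hk)
  have base := ((isHomogeneous_C (Fin 2) (f.coeff k)).mul
    ((isHomogeneous_X K (0 : Fin 2)).pow k)).mul ((etaF_isHomogeneous s).pow (d - k))
  have : (C (f.coeff k) * X (0:Fin 2) ^ k * etaF s ^ (d - k)).IsHomogeneous (k + (d - k)) := by
    simpa using base
  rwa [Nat.add_sub_cancel' hk'] at this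

lemma psi_Hgen {d : ℕ} {f : Polynomial K} (hf : f.natDegree ≤ d) :
    psi s (Hgen s d f) = f := by
  rw [Hgen, map_sum]
  simp only [map_mul, map_pow, psi_C, psi_X0, psi_etaF, one_pow, mul_one]
  simp only [Polynomial.C_mul_X_pow_eq_monomial]
  exact (f.as_sum_range' (d + 1) (Nat.lt_succ_of_le hf)).symm

lemma psi_inj_homog {d : ℕ} {f : MvPolynomial (Fin 2) K}
    (hf : f.IsHomogeneous d) (h : psi s f = 0) : f = 0 := by
  have key : etaF s * f = 0 := by
    refine MvPolynomial.IsHomogeneous.eq_zero_of_forall_eval_eq_zero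
      ((etaF_isHomogeneous s).mul hf) (fun z => ?_)
    rw [map_mul]
    have heval : eval z (etaF s) = z 1 - s * z 0 := by simp [etaF]
    by_cases hl : z 1 - s * z 0 = 0
    · rw [heval, hl, zero_mul]
    · have hz : z = (z 1 - s * z 0) • ![z 0 / (z 1 - s * z 0),
          s * (z 0 / (z 1 - s * z 0)) + 1] := by
        funext j
        fin_cases j
        · simp only [Fin.zero_eta, Pi.smul_apply, Matrix.cons_val_zero, smul_eq_mul]
          field_simp
          rw [mul_div_assoc, div_self (by rw [mul_comm (z 0) s]; exact hl), mul_one]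
        · simp only [Fin.mk_one, Pi.smul_apply, Matrix.cons_val_one, Matrix.cons_val_zero, Matrix.head_cons, smul_eq_mul]
          field_simp
          try ring
      have h1 : eval z f = (z 1 - s * z 0) ^ d *
          eval ![z 0 / (z 1 - s * z 0), s * (z 0 / (z 1 - s * z 0)) + 1] f := by
        conv_lhs => rw [hz]
        exact hf.eval_smul' _ _
      rw [h1, ← eval_psi, h]
      simp
  have hη : etaF s ≠ 0 := by
    intro h0
    have := congrArg (eval ![(0:K), 1]) h0
    simp [etaF] at this
  rcases mul_eq_zero.mp key with h1 | h2
  · exact absurd h1 hη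
  · exact h2

lemma Hgen_psi {d : ℕ} {f : MvPolynomial (Fin 2) K} (hf : f.IsHomogeneous d) :
    Hgen s d (psi s f) = f := by
  have hdeg : (psi s f).natDegree ≤ d := natDegree_psi_le_of_homog s hf
  have hsub : (Hgen s d (psi s f) - f).IsHomogeneous d :=
    (Hgen_isHomogeneous s d _).sub hf
  have : psi s (Hgen s d (psi s f) - f) = 0 := by
    rw [map_sub, psi_Hgen s hdeg, sub_self]
  exact sub_eq_zero.mp (psi_inj_homog s hsub this)


lemma Hgen_mul {d e : ℕ} {F G : Polynomial K} (hF : F.natDegree ≤ d) (hG : G.natDegree ≤ e) :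
    Hgen s (d + e) (F * G) = Hgen s d F * Hgen s e G := by
  by_cases h0 : F * G = 0
  · rcases mul_eq_zero.mp h0 with h | h <;> rw [h] <;>
      simp [Hgen, mul_comm] <;> simp [Hgen]
  · have hsub : (Hgen s (d+e) (F*G) - Hgen s d F * Hgen s e G).IsHomogeneous (d+e) :=
      (Hgen_isHomogeneous s _ _).sub ((Hgen_isHomogeneous s d F).mul (Hgen_isHomogeneous s e G))
    have hpsi : psi s (Hgen s (d+e) (F*G) - Hgen s d F * Hgen s e G) = 0 := by
      rw [map_sub, map_mul, psi_Hgen s hF, psi_Hgen s hG,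
        psi_Hgen s (le_trans (Polynomial.natDegree_mul_le) (add_le_add hF hG)), sub_self]
    exact sub_eq_zero.mp (psi_inj_homog s hsub hpsi)

lemma lift_dvd {df dg : ℕ} {f g : MvPolynomial (Fin 2) K}
    (hf : f.IsHomogeneous df) (hg : g.IsHomogeneous dg)
    (hfd : (psi s f).natDegree = df) (hf0 : psi s f ≠ 0)
    (hdvd : psi s f ∣ psi s g) : f ∣ g := by
  obtain ⟨h, hh⟩ := hdvd
  by_cases hg0 : psi s g = 0
  · have : g = 0 := psi_inj_homog s hg hg0
    rw [this]; exact dvd_zero f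
  · have hh0 : h ≠ 0 := by rintro rfl; rw [mul_zero] at hh; exact hg0 hh
    have hnd : (psi s g).natDegree = df + h.natDegree := by
      rw [hh, Polynomial.natDegree_mul hf0 hh0, hfd]
    have hle : df + h.natDegree ≤ dg := by
      rw [← hnd]; exact natDegree_psi_le_of_homog s hg
    have hdfg : df ≤ dg := le_trans (Nat.le_add_right _ _) hle
    have hdh : h.natDegree ≤ dg - df := by omega
    have : g = Hgen s dg (psi s g) := (Hgen_psi s hg).symm
    rw [this, hh, show dg = df + (dg - df) from (Nat.add_sub_cancel' hdfg).symm,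
      Hgen_mul s (le_of_eq hfd) hdh, Hgen_psi s hf]
    exact Dvd.intro _ rfl

end Psi

section CRT
variable {K : Type} [Field K]

lemma crt_poly {ι : Type} (q r : ι → Polynomial K) :
    ∀ (T : Finset ι), (∀ i ∈ T, ∀ j ∈ T, i ≠ j → IsCoprime (q i) (q j)) →
    ∃ w, ∀ i ∈ T, q i ∣ w - r i := by
  classical
  intro T
  induction T using Finset.induction_on with
  | empty => exact fun _ => ⟨0, fun i hi => absurd hi (by simp)⟩
  | @insert a T' ha ih =>
    intro hco
    obtain ⟨w, hw⟩ := ih fun i hi j hj hij =>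
      hco i (Finset.mem_insert_of_mem hi) j (Finset.mem_insert_of_mem hj) hij
    have hcop : IsCoprime (q a) (∏ i ∈ T', q i) :=
      IsCoprime.prod_right fun i hi =>
        hco a (Finset.mem_insert_self a T') i (Finset.mem_insert_of_mem hi)
          (fun h => ha (h ▸ hi))
    obtain ⟨u, v, huv⟩ := hcop
    refine ⟨w + (∏ i ∈ T', q i) * (v * (r a - w)), fun i hi => ?_⟩
    rcases Finset.mem_insert.mp hi with rfl | hi'
    · refine ⟨-(r i - w) * u, ?_⟩
      linear_combination (r i - w) * huv
    · have : w + (∏ i ∈ T', q i) * (v * (r a - w)) - r i =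
          (w - r i) + (∏ i ∈ T', q i) * (v * (r a - w)) := by ring
      rw [this]
      exact dvd_add (hw i hi') ((Finset.dvd_prod_of_mem q hi').mul_right _)

lemma dvd_homogeneousComponent {h f : MvPolynomial (Fin 2) K} {d : ℕ}
    (hh : h.IsHomogeneous d) (hdvd : h ∣ f) (k : ℕ) :
    h ∣ homogeneousComponent k f := by
  obtain ⟨g, rfl⟩ := hdvd
  have hexp : h * g = ∑ i ∈ Finset.range (g.totalDegree + 1),
      h * homogeneousComponent i g := by
    rw [← Finset.mul_sum, sum_homogeneousComponent]
  rw [hexp, map_sum]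
  refine Finset.dvd_sum fun i _ => ?_
  rw [homogeneousComponent_of_mem ((mem_homogeneousSubmodule _ _).mpr
    (hh.mul (homogeneousComponent_isHomogeneous i g)))]
  split_ifs
  · exact Dvd.intro _ rfl
  · exact dvd_zero h

end CRT

/-- For a 2-multiarrangement `(A,m)` with lines `H_0, …, H_n`, positive multiplicities
ordered decreasingly `m 0 ≥ m 1 ≥ … ≥ m n`: if `m 0 ≥ |m|/2` then the exponents are
`(m 0, |m| − m 0)`. -/
theorem exponents_unbalanced_max {K : Type} [Field K] [CharZero K] (n : ℕ)
    (c : Fin (n + 1) → Fin 2 → K)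
    (hne : ∀ i, c i ≠ 0)
    (hdist : ∀ i i', i ≠ i' → ∀ t : K, c i ≠ t • c i')
    (m : Fin (n + 1) → ℕ)
    (hmpos : ∀ i, 0 < m i)
    (hmono : ∀ i j : Fin (n + 1), i ≤ j → m j ≤ m i)
    (hbig : ∑ i, m i ≤ 2 * m 0) :
    ∃ b : Module.Basis (Fin 2) (MvPolynomial (Fin 2) K) (Dlog c m),
      (∀ j, ((b 0 : Fin 2 → MvPolynomial (Fin 2) K) j).IsHomogeneous (m 0)) ∧
      (∀ j, ((b 1 : Fin 2 → MvPolynomial (Fin 2) K) j).IsHomogeneous ((∑ i, m i) - m 0)) := by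

  classical
  -- choose direction parameter s
  obtain ⟨s, hs⟩ := Infinite.exists_notMem_finset
    (Finset.image (fun i => -(c i 0) / (c i 1)) (Finset.univ : Finset (Fin (n+1))))
  have hcne : ∀ i, c i 0 ≠ 0 ∨ c i 1 ≠ 0 := by
    intro i
    by_contra h
    push_neg at h
    exact hne i (funext fun j => by fin_cases j <;> simp [h.1, h.2])
  have hA : ∀ i, c i 0 + s * c i 1 ≠ 0 := by
    intro i h
    by_cases hb : c i 1 = 0
    · rw [hb, mul_zero, add_zero] at h
      exact (hcne i).resolve_left (fun h' => h' h) hb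
    · apply hs
      refine Finset.mem_image.mpr ⟨i, Finset.mem_univ _, ?_⟩
      field_simp
      linear_combination -h
  -- the images of the linear forms
  set p : Fin (n+1) → Polynomial K := fun i => psi s (linForm (c i)) with hpdef
  have hp : ∀ i, p i = Polynomial.C (c i 0 + s * c i 1) * Polynomial.X + Polynomial.C (c i 1) :=
    fun i => psi_linForm s (c i)
  have hpdeg : ∀ i, (p i).natDegree = 1 := fun i => by
    rw [hp i]; exact Polynomial.natDegree_linear (hA i)
  have hpne : ∀ i, p i ≠ 0 := by
    intro i h
    have := hpdeg i
    rw [h] at this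
    simp at this
  have hpcop : ∀ i j, i ≠ j → IsCoprime (p i) (p j) := by
    intro i j hij
    obtain ⟨Li, hLi⟩ : ∃ x : K, x = c i 0 + s * c i 1 := ⟨_, rfl⟩
    obtain ⟨Lj, hLj⟩ : ∃ x : K, x = c j 0 + s * c j 1 := ⟨_, rfl⟩
    obtain ⟨D, hD⟩ : ∃ x : K, x = Li * c j 1 - Lj * c i 1 := ⟨_, rfl⟩
    have hLjne : Lj ≠ 0 := by rw [hLj]; exact hA j
    have hDne : D ≠ 0 := by
      intro h0
      have hrel : Li * c j 1 - Lj * c i 1 = 0 := by rw [← hD, h0]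
      apply hdist i j hij (Li / Lj)
      funext k
      fin_cases k
      · show c i 0 = Li / Lj * c j 0
        have e0 : c i 0 = Li - s * c i 1 := by rw [hLi]; ring
        have e1 : c j 0 = Lj - s * c j 1 := by rw [hLj]; ring
        rw [e0, e1]
        field_simp
        linear_combination s * hrel
      · show c i 1 = Li / Lj * c j 1
        field_simp
        linear_combination -hrel
    refine ⟨Polynomial.C (-Lj / D), Polynomial.C (Li / D), ?_⟩
    rw [hp i, hp j, ← hLi, ← hLj]
    have expand : Polynomial.C (-Lj / D) * (Polynomial.C Li * Polynomial.X + Polynomial.C (c i 1))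
        + Polynomial.C (Li / D) * (Polynomial.C Lj * Polynomial.X + Polynomial.C (c j 1)) =
        Polynomial.C ((-Lj / D) * Li + (Li / D) * Lj) * Polynomial.X
        + Polynomial.C ((-Lj / D) * c i 1 + (Li / D) * c j 1) := by
      simp only [Polynomial.C_add, Polynomial.C_mul]; ring
    rw [expand]
    have h1 : (-Lj / D) * Li + (Li / D) * Lj = 0 := by field_simp; ring
    have h2 : (-Lj / D) * c i 1 + (Li / D) * c j 1 = 1 := by
      field_simp
      linear_combination -hD
    rw [h1, h2]
    simp
  -- the basic polynomials
  set T : Finset (Fin (n+1)) := Finset.univ.erase 0 with hT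
  set A : MvPolynomial (Fin 2) K := linForm (c 0) ^ m 0 with hAdef
  set P : MvPolynomial (Fin 2) K := ∏ i ∈ T, linForm (c i) ^ m i with hPdef
  set sdeg : ℕ := ∑ i ∈ T, m i with hsdeg
  have hsd : m 0 + sdeg = ∑ i, m i := by
    rw [hsdeg, hT]
    exact Finset.add_sum_erase Finset.univ m (Finset.mem_univ 0)
  have hsle : sdeg ≤ m 0 := by omega
  have hAhom : A.IsHomogeneous (m 0) := by
    simpa using (linForm_isHomogeneous (c 0)).pow (m 0)
  have hPhom : P.IsHomogeneous sdeg := by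
    rw [hPdef, hsdeg]
    refine IsHomogeneous.prod _ _ _ fun i _ => ?_
    simpa using (linForm_isHomogeneous (c i)).pow (m i)
  have hQeq : A * P = ∏ i, linForm (c i) ^ m i := by
    rw [hAdef, hPdef, hT]
    exact Finset.mul_prod_erase Finset.univ (fun i => linForm (c i) ^ m i) (Finset.mem_univ (0 : Fin (n+1)))
  have hlfne : ∀ i, linForm (c i) ≠ 0 := fun i => linForm_ne_zero (hne i)
  have hQne : A * P ≠ 0 := by
    rw [hQeq]
    exact Finset.prod_ne_zero_iff.mpr fun i _ => pow_ne_zero _ (hlfne i)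
  have hpsiAP : psi s (A * P) = ∏ i, p i ^ m i := by
    rw [hQeq, map_prod]
    exact Finset.prod_congr rfl fun i _ => map_pow _ _ _
  have hndAP : (psi s (A * P)).natDegree = m 0 + sdeg := by
    have he : ∑ i, (p i ^ m i).natDegree = ∑ i, m i :=
      Finset.sum_congr rfl fun i _ => by rw [Polynomial.natDegree_pow, hpdeg i, mul_one]
    rw [hpsiAP, Polynomial.natDegree_prod _ _ (fun i _ => pow_ne_zero _ (hpne i)), he, ← hsd]
  have hpsiAPne : psi s (A * P) ≠ 0 := by
    rw [hpsiAP]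
    exact Finset.prod_ne_zero_iff.mpr fun i _ => pow_ne_zero _ (hpne i)
  -- v1
  obtain ⟨v10, v11, hv1⟩ : ∃ u v : K, c 0 0 * u + c 0 1 * v = 1 := by
    rcases hcne 0 with h | h
    · exact ⟨(c 0 0)⁻¹, 0, by field_simp; ring⟩
    · exact ⟨0, (c 0 1)⁻¹, by field_simp; ring⟩
  -- the d-coefficients
  set dcoef : Fin (n+1) → K := fun i => -(c i 0) * c 0 1 + c i 1 * c 0 0 with hdcoef
  have hd0 : dcoef 0 = 0 := by show -(c 0 0) * c 0 1 + c 0 1 * c 0 0 = 0; ring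
  have hdne : ∀ i ∈ T, dcoef i ≠ 0 := by
    intro i hi h0
    have hi0 : i ≠ 0 := (Finset.mem_erase.mp hi).1
    rcases hcne 0 with h | h
    · apply hdist i 0 hi0 (c i 0 / c 0 0)
      funext k
      fin_cases k
      · show c i 0 = c i 0 / c 0 0 * c 0 0
        field_simp
      · show c i 1 = c i 0 / c 0 0 * c 0 1
        field_simp
        linear_combination h0
    · apply hdist i 0 hi0 (c i 1 / c 0 1)
      funext k
      fin_cases k
      · show c i 0 = c i 1 / c 0 1 * c 0 0
        field_simp
        linear_combination -h0
      · show c i 1 = c i 1 / c 0 1 * c 0 1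
        field_simp
  -- the targets and CRT
  set rtgt : Fin (n+1) → MvPolynomial (Fin 2) K :=
    fun i => C (-(c i 0 * v10 + c i 1 * v11) / dcoef i) * A with hrtgt
  have hrtgthom : ∀ i, (rtgt i).IsHomogeneous (m 0) := by
    intro i
    rw [hrtgt]
    simpa using (isHomogeneous_C (Fin 2) _).mul hAhom
  obtain ⟨w0, hw0⟩ := crt_poly (fun i => p i ^ m i) (fun i => psi s (rtgt i)) T
    (fun i _ j _ hij => (hpcop i j hij).pow)
  -- reduce CRT solution mod the product
  set Qt : Polynomial K := ∏ i ∈ T, p i ^ m i with hQt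
  have hQtne : Qt ≠ 0 := Finset.prod_ne_zero_iff.mpr fun i _ => pow_ne_zero _ (hpne i)
  have hndQt : Qt.natDegree = sdeg := by
    rw [hQt, Polynomial.natDegree_prod _ _ (fun i _ => pow_ne_zero _ (hpne i)), hsdeg]
    exact Finset.sum_congr rfl fun i _ => by rw [Polynomial.natDegree_pow, hpdeg i, mul_one]
  set M : Polynomial K := Qt * Polynomial.C Qt.leadingCoeff⁻¹ with hM
  have hMmonic : M.Monic := Polynomial.monic_mul_leadingCoeff_inv hQtne
  have hMdeg : M.degree = Qt.degree := Polynomial.degree_mul_leadingCoeff_inv _ hQtne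
  set w1 : Polynomial K := w0 %ₘ M with hw1
  have hw1deg : w1.natDegree ≤ m 0 := by
    by_cases h : w1 = 0
    · rw [h]
      simp
    · have hlt : w1.degree < M.degree := Polynomial.degree_modByMonic_lt w0 hMmonic
      have h2 : w1.natDegree < M.natDegree := Polynomial.natDegree_lt_natDegree h hlt
      have hMnd : M.natDegree = sdeg := by
        rw [Polynomial.natDegree_eq_of_degree_eq hMdeg, hndQt]
      omega
  have hw1cong : ∀ i ∈ T, p i ^ m i ∣ w1 - psi s (rtgt i) := by
    intro i hi
    have h1 : Qt ∣ M * (w0 /ₘ M) :=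
      ((dvd_mul_right Qt (Polynomial.C Qt.leadingCoeff⁻¹)).mul_right _)
    have h2 : w1 - w0 = -(M * (w0 /ₘ M)) := by
      linear_combination (Polynomial.modByMonic_add_div w0 M)
    have h3 : p i ^ m i ∣ w1 - w0 := by
      rw [h2]
      exact (dvd_neg.mpr ((Finset.dvd_prod_of_mem (fun i => p i ^ m i) hi).trans h1))
    have h4 : w1 - psi s (rtgt i) = (w1 - w0) + (w0 - psi s (rtgt i)) := by ring
    rw [h4]
    exact dvd_add h3 (hw0 i hi)
  -- homogeneous CRT solution
  set w : MvPolynomial (Fin 2) K := Hgen s (m 0) w1 with hwdef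
  have hwhom : w.IsHomogeneous (m 0) := Hgen_isHomogeneous s _ _
  have hpsiw : psi s w = w1 := psi_Hgen s hw1deg
  have hwcong : ∀ i ∈ T, linForm (c i) ^ m i ∣ w - rtgt i := by
    intro i hi
    refine lift_dvd s (df := m i) (dg := m 0) ?_ ?_ ?_ ?_ ?_
    · simpa using (linForm_isHomogeneous (c i)).pow (m i)
    · exact hwhom.sub (hrtgthom i)
    · show ((psi s) (linForm (c i) ^ m i)).natDegree = m i
      rw [map_pow, Polynomial.natDegree_pow, hpdeg i, mul_one]
    · show (psi s) (linForm (c i) ^ m i) ≠ 0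
      rw [map_pow]
      exact pow_ne_zero _ (hpne i)
    · show (psi s) (linForm (c i) ^ m i) ∣ (psi s) (w - rtgt i)
      rw [map_pow, map_sub, hpsiw]
      exact hw1cong i hi
  -- the two derivations
  set d1 : Fin 2 → MvPolynomial (Fin 2) K :=
    ![C v10 * A + C (-(c 0 1)) * w, C v11 * A + C (c 0 0) * w] with hd1
  set d2 : Fin 2 → MvPolynomial (Fin 2) K :=
    ![C (-(c 0 1)) * P, C (c 0 0) * P] with hd2
  have hd1e0 : d1 0 = C v10 * A + C (-(c 0 1)) * w := by rw [hd1]; simp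
  have hd1e1 : d1 1 = C v11 * A + C (c 0 0) * w := by rw [hd1]; simp
  have hd2e0 : d2 0 = C (-(c 0 1)) * P := by rw [hd2]; simp
  have hd2e1 : d2 1 = C (c 0 0) * P := by rw [hd2]; simp
  have happ1 : ∀ i, appL (c i) d1 = C (c i 0 * v10 + c i 1 * v11) * A + C (dcoef i) * w := by
    intro i
    rw [appL_apply, hd1e0, hd1e1]
    have hdc : dcoef i = -(c i 0) * c 0 1 + c i 1 * c 0 0 := rfl
    rw [hdc]
    simp only [map_add, map_mul, map_neg]
    ring
  have happ2 : ∀ i, appL (c i) d2 = C (dcoef i) * P := by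
    intro i
    rw [appL_apply, hd2e0, hd2e1]
    have hdc : dcoef i = -(c i 0) * c 0 1 + c i 1 * c 0 0 := rfl
    rw [hdc]
    simp only [map_add, map_mul, map_neg]
    ring
  have hmem2 : d2 ∈ Dlog c m := by
    intro i
    rw [happ2]
    by_cases hi : i = 0
    · subst hi
      rw [hd0]
      simp
    · exact ((Finset.dvd_prod_of_mem (fun i => linForm (c i) ^ m i)
        (Finset.mem_erase.mpr ⟨hi, Finset.mem_univ i⟩)).mul_left _)
  have hmem1 : d1 ∈ Dlog c m := by
    intro i
    rw [happ1]
    by_cases hi : i = 0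
    · subst hi
      rw [hv1, hd0]
      simpa [hAdef] using dvd_refl A
    · have hiT : i ∈ T := Finset.mem_erase.mpr ⟨hi, Finset.mem_univ i⟩
      have hfs : dcoef i * (-(c i 0 * v10 + c i 1 * v11) / dcoef i)
          = -(c i 0 * v10 + c i 1 * v11) := by
        field_simp
        exact congrArg Neg.neg (mul_div_cancel_left₀ _ (hdne i hiT))
      have he : C (c i 0 * v10 + c i 1 * v11) * A + C (dcoef i) * w
          = C (dcoef i) * (w - rtgt i) := by
        show _ = C (dcoef i) * (w - C (-(c i 0 * v10 + c i 1 * v11) / dcoef i) * A)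
        rw [mul_sub, ← mul_assoc, ← map_mul, hfs]
        simp only [map_neg]
        ring
      rw [he]
      exact (hwcong i hiT).mul_left _
  -- homogeneity of the derivations
  have hd1hom : ∀ j, (d1 j).IsHomogeneous (m 0) := by
    rw [Fin.forall_fin_two]
    constructor
    · rw [hd1e0]
      simpa using ((isHomogeneous_C (Fin 2) v10).mul hAhom).add
        ((isHomogeneous_C (Fin 2) (-(c 0 1))).mul hwhom)
    · rw [hd1e1]
      simpa using ((isHomogeneous_C (Fin 2) v11).mul hAhom).add
        ((isHomogeneous_C (Fin 2) (c 0 0)).mul hwhom)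
  have hd2hom : ∀ j, (d2 j).IsHomogeneous sdeg := by
    rw [Fin.forall_fin_two]
    constructor
    · rw [hd2e0]
      simpa using (isHomogeneous_C (Fin 2) (-(c 0 1))).mul hPhom
    · rw [hd2e1]
      simpa using (isHomogeneous_C (Fin 2) (c 0 0)).mul hPhom
  -- determinant of the pair
  have hCv : C (c 0 0) * C v10 + C (c 0 1) * C v11 = (1 : MvPolynomial (Fin 2) K) := by
    rw [← map_mul, ← map_mul, ← map_add, hv1, map_one]
  have hdet12 : d1 0 * d2 1 - d1 1 * d2 0 = A * P := by
    rw [hd1e0, hd1e1, hd2e0, hd2e1]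
    simp only [map_neg]
    linear_combination (A * P) * hCv
  -- key divisibility
  have hkey : ∀ θ : Fin 2 → MvPolynomial (Fin 2) K, θ ∈ Dlog c m →
      ∀ η : Fin 2 → MvPolynomial (Fin 2) K, η ∈ Dlog c m → ∀ dd : ℕ,
      (θ 0 * η 1 - θ 1 * η 0).IsHomogeneous dd → (A * P) ∣ (θ 0 * η 1 - θ 1 * η 0) := by
    intro θ hθ η hη dd hhom
    have hstep : ∀ i, linForm (c i) ^ m i ∣ (θ 0 * η 1 - θ 1 * η 0) := by
      intro i
      have hb : C (c i 1) * (θ 0 * η 1 - θ 1 * η 0)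
          = θ 0 * appL (c i) η - appL (c i) θ * η 0 := by
        rw [appL_apply, appL_apply]; ring
      have ha : C (c i 0) * (θ 0 * η 1 - θ 1 * η 0)
          = appL (c i) θ * η 1 - θ 1 * appL (c i) η := by
        rw [appL_apply, appL_apply]; ring
      have hdvda : linForm (c i) ^ m i ∣ C (c i 0) * (θ 0 * η 1 - θ 1 * η 0) := by
        rw [ha]; exact dvd_sub ((hθ i).mul_right _) ((hη i).mul_left _)
      have hdvdb : linForm (c i) ^ m i ∣ C (c i 1) * (θ 0 * η 1 - θ 1 * η 0) := by
        rw [hb]; exact dvd_sub ((hη i).mul_left _) ((hθ i).mul_right _)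
      rcases hcne i with h | h
      · have he : (θ 0 * η 1 - θ 1 * η 0)
            = C (c i 0)⁻¹ * (C (c i 0) * (θ 0 * η 1 - θ 1 * η 0)) := by
          rw [← mul_assoc, ← map_mul, inv_mul_cancel₀ h, map_one, one_mul]
        rw [he]; exact hdvda.mul_left _
      · have he : (θ 0 * η 1 - θ 1 * η 0)
            = C (c i 1)⁻¹ * (C (c i 1) * (θ 0 * η 1 - θ 1 * η 0)) := by
          rw [← mul_assoc, ← map_mul, inv_mul_cancel₀ h, map_one, one_mul]
        rw [he]; exact hdvdb.mul_left _
    have hψ : ∀ i, p i ^ m i ∣ psi s (θ 0 * η 1 - θ 1 * η 0) := by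
      intro i
      obtain ⟨u, hu⟩ := hstep i
      exact ⟨psi s u, by rw [hu, map_mul, map_pow]⟩
    have hprod : (∏ i, p i ^ m i) ∣ psi s (θ 0 * η 1 - θ 1 * η 0) :=
      Finset.prod_dvd_of_coprime
        (fun i _ j hj hij => (hpcop i j hij).pow) (fun i _ => hψ i)
    refine lift_dvd s (df := m 0 + sdeg) (dg := dd) (hAhom.mul hPhom) hhom hndAP hpsiAPne ?_
    rw [hpsiAP]
    exact hprod
  -- Cramer decomposition for homogeneous members
  have hstepspan : ∀ Θ : Fin 2 → MvPolynomial (Fin 2) K, Θ ∈ Dlog c m → ∀ dd : ℕ,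
      (∀ j, (Θ j).IsHomogeneous dd) →
      ∃ pq : Fin 2 → MvPolynomial (Fin 2) K, ∀ j, pq 0 * d1 j + pq 1 * d2 j = Θ j := by
    intro Θ hΘ dd hhom
    obtain ⟨p', hp'⟩ := hkey Θ hΘ d2 hmem2 (dd + sdeg)
      (((hhom 0).mul (hd2hom 1)).sub ((hhom 1).mul (hd2hom 0)))
    obtain ⟨q', hq'⟩ := hkey d1 hmem1 Θ hΘ (m 0 + dd)
      (((hd1hom 0).mul (hhom 1)).sub ((hd1hom 1).mul (hhom 0)))
    refine ⟨![p', q'], ?_⟩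
    rw [Fin.forall_fin_two]
    have hz : ∀ j, (A * P) * (p' * d1 j + q' * d2 j - Θ j) = 0 := by
      rw [Fin.forall_fin_two]
      constructor
      · linear_combination (-(d1 0)) * hp' + (-(d2 0)) * hq' + (Θ 0) * hdet12
      · linear_combination (-(d1 1)) * hp' + (-(d2 1)) * hq' + (Θ 1) * hdet12
    have hz' : ∀ j, p' * d1 j + q' * d2 j - Θ j = 0 :=
      fun j => (mul_eq_zero.mp (hz j)).resolve_left hQne
    constructor
    · have := hz' 0
      simp only [Matrix.cons_val_zero, Matrix.cons_val_one, Matrix.head_cons]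
      linear_combination this
    · have := hz' 1
      simp only [Matrix.cons_val_zero, Matrix.cons_val_one, Matrix.head_cons]
      linear_combination this
  -- linear independence
  have hli : LinearIndependent (MvPolynomial (Fin 2) K)
      ![(⟨d1, hmem1⟩ : Dlog c m), ⟨d2, hmem2⟩] := by
    rw [Fintype.linearIndependent_iff]
    intro g hg
    have hg' : g 0 • d1 + g 1 • d2 = 0 := by
      have h1 := congrArg (Subtype.val) hg
      simpa [Fin.sum_univ_two] using h1
    have he : ∀ j, g 0 * d1 j + g 1 * d2 j = 0 := by
      intro j
      have h2 := congrFun hg' j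
      simpa using h2
    have h0 : g 0 * (A * P) = 0 := by
      linear_combination (d2 1) * he 0 - (d2 0) * he 1 - g 0 * hdet12
    have h1 : g 1 * (A * P) = 0 := by
      linear_combination (d1 0) * he 1 - (d1 1) * he 0 - g 1 * hdet12
    intro i
    fin_cases i
    · exact (mul_eq_zero.mp h0).resolve_right hQne
    · exact (mul_eq_zero.mp h1).resolve_right hQne
  -- spanning
  have hspan : ∀ θh : Dlog c m, θh ∈ Submodule.span (MvPolynomial (Fin 2) K)
      (Set.range ![(⟨d1, hmem1⟩ : Dlog c m), ⟨d2, hmem2⟩]) := by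
    rintro ⟨θ, hθ⟩
    set N : ℕ := ((θ 0).totalDegree ⊔ (θ 1).totalDegree) + 1 with hN
    have hcomp : ∀ k, (fun j => homogeneousComponent k (θ j)) ∈ Dlog c m := by
      intro k i
      have happ : appL (c i) (fun j => homogeneousComponent k (θ j))
          = homogeneousComponent k (appL (c i) θ) := by
        rw [appL_apply, appL_apply, map_add, homogeneousComponent_C_mul,
          homogeneousComponent_C_mul]
      rw [happ]
      exact dvd_homogeneousComponent
        (by simpa using (linForm_isHomogeneous (c i)).pow (m i)) (hθ i) k
    have hsum : ∀ j, θ j = ∑ k ∈ Finset.range N, homogeneousComponent k (θ j) := by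
      intro j
      have hsub : Finset.range ((θ j).totalDegree + 1) ⊆ Finset.range N := by
        apply Finset.range_subset_range.mpr
        have hj : (θ j).totalDegree ≤ (θ 0).totalDegree ⊔ (θ 1).totalDegree := by
          fin_cases j
          · exact le_max_left _ _
          · exact le_max_right _ _
        omega
      conv_lhs => rw [← sum_homogeneousComponent (θ j)]
      refine Finset.sum_subset hsub fun k _ hk => ?_
      refine homogeneousComponent_eq_zero _ _ ?_
      simp only [Finset.mem_range, not_lt] at hk
      omega
    have hdecomp : (⟨θ, hθ⟩ : Dlog c m) = ∑ k ∈ Finset.range N,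
        (⟨fun j => homogeneousComponent k (θ j), hcomp k⟩ : Dlog c m) := by
      apply Subtype.ext
      rw [AddSubmonoidClass.coe_finset_sum]
      funext j
      rw [Finset.sum_apply]
      exact hsum j
    rw [hdecomp]
    refine Submodule.sum_mem _ fun k _ => ?_
    obtain ⟨pq, hpq⟩ := hstepspan _ (hcomp k) k
      (fun j => homogeneousComponent_isHomogeneous k (θ j))
    have hrepr : (⟨fun j => homogeneousComponent k (θ j), hcomp k⟩ : Dlog c m)
        = pq 0 • (⟨d1, hmem1⟩ : Dlog c m) + pq 1 • (⟨d2, hmem2⟩ : Dlog c m) := by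
      apply Subtype.ext
      funext j
      simpa using (hpq j).symm
    rw [hrepr]
    exact Submodule.add_mem _
      (Submodule.smul_mem _ _ (Submodule.subset_span ⟨0, rfl⟩))
      (Submodule.smul_mem _ _ (Submodule.subset_span ⟨1, rfl⟩))
  have hsp : ⊤ ≤ Submodule.span (MvPolynomial (Fin 2) K)
      (Set.range ![(⟨d1, hmem1⟩ : Dlog c m), ⟨d2, hmem2⟩]) := fun x _ => hspan x
  refine ⟨Module.Basis.mk hli hsp, ?_, ?_⟩
  · intro j
    rw [Module.Basis.mk_apply]
    simpa using hd1hom j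
  · intro j
    rw [Module.Basis.mk_apply]
    have hdeg : (∑ i, m i) - m 0 = sdeg := by omega
    rw [hdeg]
    simpa using hd2hom j
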